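/- arXiv:1507.04792 — 9 statements merged into one kernel-verified Lean document; each statement's English description precedes it below -/
import Mathlib

section
/- There exists a positive real R such that the following holds for every integer r ≥ R and every real 0 < ε ≤ 1/2: if X is a finite set of size n and X_1, …, X_r ⊆ X are subsets each of size at least (1-ε)n, then there exists a set I ⊆ {1, …, r} of size |I| = ⌈r/4⌉ such that |⋂_{i∈I} X_i| ≥ (1-2ε)^{⌈r/4⌉} · n. -/
/-!
Write `n = |X|` and `m = ⌈r/4⌉`. If `εr ≤ 2`, any `m` of the sets will do: by the union bound
their intersection misses at most `mεn` points, and `(1 - 2ε)^m ≤ 1 - εm` because `ε(m - 1) ≤ 1/2`.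

If `εr > 2`, count the pairs `(x, I)` with `|I| = m` and `x ∈ ⋂_{i ∈ I} X_i`. A point lying in
`d(x)` of the sets is counted `C(d(x), m)` times, and the degrees `d(x)` average at least
`a = ⌊(1 - ε)r⌋`, so by convexity of `d ↦ C(d, m)` some `I` has
`|⋂_{i ∈ I} X_i| ≥ n C(a, m) / C(r, m) ≥ (1 - 2ε)^m n`; the last step holds factor by factor,
as `a - j ≥ (1 - 2ε)(r - j)` for `j < m` once `εr ≥ 2`.
-/

open Finset

namespace Nat

theorem choose_add_mul_choose_le_choose_add (m a k : ℕ) :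
    a.choose (m + 1) + k * a.choose m ≤ (a + k).choose (m + 1) := by
  induction k with
  | zero => simp
  | succ k ih =>
    have := choose_le_choose m (le_add_right a k)
    rw [← add_assoc, choose_succ_succ', add_one_mul]
    omega

theorem choose_add_le_choose_add_mul_choose (m d k : ℕ) :
    (d + k).choose (m + 1) ≤ d.choose (m + 1) + k * (d + k).choose m := by
  induction k with
  | zero => simp
  | succ k ih =>
    have hmono := choose_le_choose m (by omega : d + k ≤ d + k + 1)
    have := Nat.mul_le_mul_left k hmono
    rw [← add_assoc, choose_succ_succ', add_one_mul]
    omega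

/-- The convex function `d ↦ d.choose (m + 1)` lies above its discrete tangent line at `a`,
whose slope is `a.choose m`. -/
theorem choose_add_mul_choose_le_choose_add_mul_choose (m a d : ℕ) :
    a.choose (m + 1) + d * a.choose m ≤ d.choose (m + 1) + a * a.choose m := by
  rcases le_total a d with h | h
  · obtain ⟨k, rfl⟩ := exists_add_of_le h
    have := choose_add_mul_choose_le_choose_add m a k
    rw [add_mul]
    omega
  · obtain ⟨k, rfl⟩ := exists_add_of_le h
    have := choose_add_le_choose_add_mul_choose m d k
    rw [add_mul]
    omega

end Nat

theorem card_mul_choose_le_sum_choose {ι : Type*} (s : Finset ι) (d : ι → ℕ) {a : ℕ}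
    (h : #s * a ≤ ∑ x ∈ s, d x) (m : ℕ) : #s * a.choose m ≤ ∑ x ∈ s, (d x).choose m := by
  cases m with
  | zero => simp
  | succ m =>
    have htan := sum_le_sum fun x (_ : x ∈ s) =>
      Nat.choose_add_mul_choose_le_choose_add_mul_choose m a (d x)
    simp only [sum_add_distrib, ← sum_mul, sum_const, smul_eq_mul] at htan
    have := Nat.mul_le_mul_right (a.choose m) h
    omega

theorem pow_mul_choose_le_choose {c : ℝ} (hc : 0 ≤ c) {r a : ℕ} :
    ∀ {m : ℕ}, m ≤ r → (∀ j < m, c * (r - j) ≤ a - j) → c ^ m * r.choose m ≤ a.choose m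
  | 0, _, _ => by simp
  | m + 1, hmr, h => by
    have ih := pow_mul_choose_le_choose hc (m := m) (by omega) fun j hj => h j (by omega)
    have hrm : 0 ≤ c * (r - m) := mul_nonneg hc (by norm_num; exact_mod_cast (by omega : m ≤ r))
    have ham : m ≤ a := by exact_mod_cast (sub_nonneg.mp (hrm.trans (h m (by omega))))
    have hr := congrArg (Nat.cast (R := ℝ)) (Nat.choose_succ_right_eq r m)
    have ha := congrArg (Nat.cast (R := ℝ)) (Nat.choose_succ_right_eq a m)
    push_cast [Nat.cast_sub (by omega : m ≤ r), Nat.cast_sub ham] at hr ha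
    refine le_of_mul_le_mul_right ?_ (by positivity : (0 : ℝ) < m + 1)
    calc c ^ (m + 1) * r.choose (m + 1) * (m + 1) = c ^ m * r.choose m * (c * (r - m)) := by
          rw [mul_assoc, hr]; ring
      _ ≤ a.choose m * (a - m) := mul_le_mul ih (h m (by omega)) hrm (by positivity)
      _ = a.choose (m + 1) * (m + 1) := ha.symm

theorem one_sub_two_mul_pow_le {ε : ℝ} (hε0 : 0 ≤ ε) (hε : ε ≤ 1 / 2) :
    ∀ {m : ℕ}, ε * (m - 1) ≤ 1 / 2 → (1 - 2 * ε) ^ m ≤ 1 - ε * m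
  | 0, _ => by simp
  | m + 1, h => by
    push_cast at h
    have ih := one_sub_two_mul_pow_le hε0 hε (m := m) (by linarith)
    have := mul_le_mul_of_nonneg_right ih (by linarith : 0 ≤ 1 - 2 * ε)
    rw [pow_succ]
    push_cast
    nlinarith

section

variable {ι α : Type*} [DecidableEq α]

theorem card_le_card_inf_add_sum_card_sdiff [Fintype α] (X : Finset α) (f : ι → Finset α)
    (I : Finset ι) : #X ≤ #(I.inf f) + ∑ i ∈ I, #(X \ f i) := by
  classical
  have hcover : X \ I.inf f ⊆ I.biUnion (X \ f ·) := by
    intro x hx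
    simp only [mem_sdiff, mem_inf, not_forall] at hx
    obtain ⟨hxX, i, hi, hxi⟩ := hx
    exact mem_biUnion.mpr ⟨i, hi, mem_sdiff.mpr ⟨hxX, hxi⟩⟩
  calc #X = #(X ∩ I.inf f) + #(X \ I.inf f) := (card_inter_add_card_sdiff _ _).symm
    _ ≤ #(I.inf f) + ∑ i ∈ I, #(X \ f i) :=
      add_le_add (card_le_card inter_subset_right) ((card_le_card hcover).trans card_biUnion_le)

theorem sum_card_inter_inf_powersetCard [Fintype ι] [DecidableEq ι] [Fintype α] (X : Finset α)
    (f : ι → Finset α) (m : ℕ) :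
    ∑ I ∈ powersetCard m univ, #(X ∩ I.inf f) = ∑ x ∈ X, (#{i | x ∈ f i}).choose m := by
  convert sum_card_bipartiteAbove_eq_sum_card_bipartiteBelow (s := powersetCard m univ) (t := X)
    (r := fun I x => x ∈ I.inf f) using 2 with I _ x _
  · simp [bipartiteAbove, filter_mem_eq_inter]
  · rw [← card_powersetCard]
    congr 1
    ext J
    simp [bipartiteBelow, mem_inf, subset_iff, and_comm]

theorem exists_card_mul_choose_le_choose_mul_card_inter_inf [Fintype ι] [DecidableEq ι]
    [Fintype α] (X : Finset α) (f : ι → Finset α) {a m : ℕ} (hm : m ≤ Fintype.card ι)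
    (ha : #X * a ≤ ∑ i, #(X ∩ f i)) :
    ∃ I : Finset ι, #I = m ∧ #X * a.choose m ≤ (Fintype.card ι).choose m * #(X ∩ I.inf f) := by
  have hdeg : ∑ x ∈ X, #{i | x ∈ f i} = ∑ i, #(X ∩ f i) := by
    refine (sum_card_bipartiteAbove_eq_sum_card_bipartiteBelow (r := fun x i => x ∈ f i)).trans ?_
    simp [bipartiteBelow, filter_mem_eq_inter]
  have hsum : #(powersetCard m (univ : Finset ι)) * (#X * a.choose m)
      ≤ (Fintype.card ι).choose m * ∑ I ∈ powersetCard m univ, #(X ∩ I.inf f) := by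
    rw [card_powersetCard, card_univ, sum_card_inter_inf_powersetCard]
    exact Nat.mul_le_mul_left _ (card_mul_choose_le_sum_choose X _ (hdeg ▸ ha) m)
  rw [← smul_eq_mul, ← sum_const, mul_sum] at hsum
  obtain ⟨I, hI, hle⟩ := exists_le_of_sum_le (powersetCard_nonempty.mpr (by simpa using hm)) hsum
  exact ⟨I, (mem_powersetCard.mp hI).2, hle⟩

variable {ε : ℝ} {X : Finset α} {f : ι → Finset α}

theorem card_sdiff_le_of_one_sub_mul_card_le (hsub : ∀ i, f i ⊆ X)
    (hcard : ∀ i, (1 - ε) * #X ≤ #(f i)) (i : ι) : (#(X \ f i) : ℝ) ≤ ε * #X := by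
  rw [card_sdiff_of_subset (hsub i), Nat.cast_sub (card_le_card (hsub i))]
  linarith [hcard i]

theorem one_sub_two_mul_pow_mul_card_le_card_inf [Fintype α] (hε0 : 0 ≤ ε) (hε : ε ≤ 1 / 2)
    (hsub : ∀ i, f i ⊆ X) (hcard : ∀ i, (1 - ε) * #X ≤ #(f i)) (I : Finset ι)
    (hI : ε * (#I - 1) ≤ 1 / 2) : (1 - 2 * ε) ^ #I * #X ≤ #(I.inf f) := by
  have hunion : (#X : ℝ) ≤ #(I.inf f) + #I * (ε * #X) := by
    calc (#X : ℝ) ≤ #(I.inf f) + ∑ i ∈ I, (#(X \ f i) : ℝ) := by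
          exact_mod_cast card_le_card_inf_add_sum_card_sdiff X f I
      _ ≤ #(I.inf f) + #I * (ε * #X) := by
          grw [sum_le_card_nsmul I _ _ fun i _ => card_sdiff_le_of_one_sub_mul_card_le hsub hcard i]
          rw [nsmul_eq_mul]
  have := mul_le_mul_of_nonneg_right (one_sub_two_mul_pow_le hε0 hε hI) (Nat.cast_nonneg #X)
  linarith

theorem exists_one_sub_two_mul_pow_mul_card_le_card_inf [Fintype ι] [DecidableEq ι] [Fintype α]
    (hε : ε ≤ 1 / 2) (hsub : ∀ i, f i ⊆ X) (hcard : ∀ i, (1 - ε) * #X ≤ #(f i)) {m : ℕ}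
    (hm : m ≤ Fintype.card ι) (hεr : 2 ≤ ε * Fintype.card ι)
    (hmr : (m : ℝ) - 1 ≤ Fintype.card ι / 4) :
    ∃ I : Finset ι, #I = m ∧ (1 - 2 * ε) ^ m * #X ≤ #(I.inf f) := by
  set r := Fintype.card ι
  set a := ⌊(1 - ε) * r⌋₊
  have hr : (0 : ℝ) ≤ r := Nat.cast_nonneg r
  have hε0 : 0 ≤ ε := by nlinarith
  have ha : (1 - ε) * r - 1 < a := Nat.sub_one_lt_floor _
  have hdeg : #X * a ≤ ∑ i, #(X ∩ f i) := by
    simp only [inter_eq_right.mpr (hsub _)]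
    have : (#X * a : ℝ) ≤ ∑ i, (#(f i) : ℝ) := calc
      (#X * a : ℝ) ≤ #X * ((1 - ε) * r) := by gcongr; exact Nat.floor_le (by nlinarith)
      _ = ∑ _i : ι, (1 - ε) * #X := by simp [r]; ring
      _ ≤ ∑ i, (#(f i) : ℝ) := sum_le_sum fun i _ => hcard i
    exact_mod_cast this
  obtain ⟨I, hIm, hI⟩ := exists_card_mul_choose_le_choose_mul_card_inter_inf X f hm hdeg
  refine ⟨I, hIm, ?_⟩
  have hratio : (1 - 2 * ε) ^ m * r.choose m ≤ a.choose m :=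
    pow_mul_choose_le_choose (by linarith) hm fun j hj => by
      have : (j : ℝ) + 1 ≤ m := by exact_mod_cast hj
      nlinarith
  refine le_of_mul_le_mul_left ?_ (by exact_mod_cast Nat.choose_pos hm : (0 : ℝ) < r.choose m)
  calc (r.choose m : ℝ) * ((1 - 2 * ε) ^ m * #X) = (1 - 2 * ε) ^ m * r.choose m * #X := by ring
    _ ≤ a.choose m * #X := by gcongr
    _ ≤ r.choose m * #(X ∩ I.inf f) := by rw [mul_comm]; exact_mod_cast hI
    _ ≤ r.choose m * #(I.inf f) := by gcongr; exact inter_subset_right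

end

/-- There exists a positive real `R` such that for every integer `r ≥ R` and every real
`0 < ε ≤ 1/2`, if `X` is a finite set of size `n` and `X_1, …, X_r ⊆ X` have size at least
`(1-ε)n`, then some `I ⊆ [r]` with `|I| = ⌈r/4⌉` satisfies
`|⋂_{i ∈ I} X_i| ≥ (1-2ε)^{⌈r/4⌉} n`. -/
theorem stmt3 :
    ∃ R : ℝ, 0 < R ∧ ∀ r : ℕ, R ≤ (r : ℝ) → ∀ ε : ℝ, 0 < ε → ε ≤ 1 / 2 →
      ∀ (α : Type) [DecidableEq α] [Fintype α] (X : Finset α) (f : Fin r → Finset α),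
        (∀ i, f i ⊆ X) →
        (∀ i, (1 - ε) * (X.card : ℝ) ≤ ((f i).card : ℝ)) →
        ∃ I : Finset (Fin r), I.card = Nat.ceil ((r : ℝ) / 4) ∧
          (1 - 2 * ε) ^ (Nat.ceil ((r : ℝ) / 4)) * (X.card : ℝ) ≤ ((I.inf f).card : ℝ) := by
  refine ⟨1, one_pos, fun r _ ε hε hε2 α _ _ X f hsub hcard => ?_⟩
  set m := ⌈(r : ℝ) / 4⌉₊
  have hr : (0 : ℝ) ≤ r := Nat.cast_nonneg r
  have hmr : m ≤ r := Nat.ceil_le.mpr (by linarith)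
  have hm : (m : ℝ) - 1 ≤ r / 4 := by
    linarith [Nat.ceil_lt_add_one (by positivity : 0 ≤ (r : ℝ) / 4)]
  rcases le_or_gt (ε * r) 2 with hsmall | hlarge
  · obtain ⟨I, -, hI⟩ := exists_subset_card_eq (s := (univ : Finset (Fin r))) (by simpa using hmr)
    refine ⟨I, hI, hI ▸ one_sub_two_mul_pow_mul_card_le_card_inf hε.le hε2 hsub hcard I ?_⟩
    rw [hI]
    nlinarith
  · exact exists_one_sub_two_mul_pow_mul_card_le_card_inf hε2 hsub hcard (by simpa using hmr)
      (by simpa using hlarge.le) (by simpa using hm)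
end

section
/- For every natural number R there exist constants γ and N_0, and a real ε_0 > 0, such that the following holds for all reals ε with 0 < ε < ε_0: if integers r > R and a real x ≥ 0 satisfy x < exp(-(log(1/ε)/ε) · log((r-R)·γ)), then G(R, r, x, ε) ≤ N_0. (One may take γ = F_χ(R, 8, 4) and N_0 = γ(γ-1).) -/
open Finset

/-- The graph of the edges of `K_n` colored `a`. -/
def colorGraph {n N : ℕ} (col : Sym2 (Fin n) → Fin N) (a : Fin N) : SimpleGraph (Fin n) :=
  SimpleGraph.fromRel (fun v w => col s(v, w) = a)

/-- The graph of the edges of `K_n` whose color lies in `Q`. -/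
def unionGraph {n N : ℕ} (col : Sym2 (Fin n) → Fin N) (Q : Finset (Fin N)) : SimpleGraph (Fin n) :=
  SimpleGraph.fromRel (fun v w => col s(v, w) ∈ Q)

/-- The colors appearing on edges of `K_n` inside the vertex set `S`. -/
def colorsOn {n N : ℕ} (col : Sym2 (Fin n) → Fin N) (S : Finset (Fin n)) : Finset (Fin N) :=
  (S.sym2.filter (fun s => ¬ s.IsDiag)).image col

/-- `(V1, V2)` is an `ε`-dense pair in `G`. -/
def densePair {n : ℕ} (G : SimpleGraph (Fin n)) (ε : ℝ) (V1 V2 : Finset (Fin n)) : Prop :=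
  Disjoint V1 V2 ∧ ∀ U1 ⊆ V1, ∀ U2 ⊆ V2,
    ε * V1.card ≤ (U1.card : ℝ) → ε * V2.card ≤ (U2.card : ℝ) →
    ∃ u ∈ U1, ∃ v ∈ U2, G.Adj u v

/-- The color `a` is `(x, ε)`-sparse in the coloring induced on the vertex set `S`. -/
def sparseOn {n N : ℕ} (col : Sym2 (Fin n) → Fin N) (S : Finset (Fin n)) (a : Fin N)
    (x ε : ℝ) : Prop :=
  ¬ ∃ V1 V2 : Finset (Fin n), V1 ⊆ S ∧ V2 ⊆ S ∧ V1.card = V2.card ∧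
      x * S.card ≤ (V1.card : ℝ) ∧ x * S.card ≤ (V2.card : ℝ) ∧
      densePair (colorGraph col a) ε V1 V2

/-- The coloring induced on `S` is `(r1, r', x, ε)`-restricted. -/
def restrictedOn {n N : ℕ} (col : Sym2 (Fin n) → Fin N) (S : Finset (Fin n))
    (r1 r' : ℕ) (x ε : ℝ) : Prop :=
  (colorsOn col S).card ≤ r' ∧
  ∃ C2 : Finset (Fin N), r' - r1 ≤ C2.card ∧ ∀ a ∈ C2, sparseOn col S a x ε

/-- `Gfun r1 r x ε` : the minimum `n` such that every `(r1, r, x, ε)`-restricted coloring of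
`K_n` contains a subgraph of chromatic number at least `8` with at most `3` distinct colors. -/
noncomputable def Gfun (r1 r : ℕ) (x ε : ℝ) : ℕ :=
  sInf { n : ℕ | ∀ col : Sym2 (Fin n) → Fin r,
    restrictedOn col Finset.univ r1 r x ε →
    ∃ Q : Finset (Fin r), Q.card ≤ 3 ∧ ¬ (unionGraph col Q).Colorable 7 }

lemma sparse_no_edge {n r : ℕ} (col : Sym2 (Fin n) → Fin r) (a : Fin r) {x ε : ℝ}
    (hε : 0 < ε) (hx : x * n ≤ 1)
    (hs : sparseOn col Finset.univ a x ε) :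
    ∀ v w : Fin n, ¬ (colorGraph col a).Adj v w := by
  intro v w hadj
  have hvw : v ≠ w := hadj.ne
  apply hs
  refine ⟨{v}, {w}, subset_univ _, subset_univ _, by simp, ?_, ?_, ?_⟩
  · simpa [Finset.card_univ] using hx
  · simpa [Finset.card_univ] using hx
  · refine ⟨by simp [hvw, hvw.symm], ?_⟩
    intro U1 hU1 U2 hU2 h1 h2
    simp only [Finset.card_singleton, Nat.cast_one, mul_one] at h1 h2
    have hU1ne : U1.Nonempty := by
      rw [← Finset.card_pos, ← Nat.cast_pos (α := ℝ)]; linarith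
    have hU2ne : U2.Nonempty := by
      rw [← Finset.card_pos, ← Nat.cast_pos (α := ℝ)]; linarith
    obtain ⟨u, hu⟩ := hU1ne
    obtain ⟨u', hu'⟩ := hU2ne
    have : u = v := by simpa using hU1 hu
    have : u' = w := by simpa using hU2 hu'
    subst_vars
    exact ⟨u, hu, u', hu', hadj⟩

/-- Base case of the recursion (Lemma 4 of the paper): for each `R` there are constants
`γ, N₀` such that `G(R, r, x, ε) ≤ N₀` whenever `x < exp(-(log(1/ε)/ε) log((r-R)γ))`. -/
theorem stmt5 (R : ℕ) :
    ∃ γ N0 : ℝ, 0 < γ ∧ ∃ ε0 : ℝ, 0 < ε0 ∧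
      ∀ ε : ℝ, 0 < ε → ε < ε0 →
      ∀ r : ℕ, R < r →
      ∀ x : ℝ, 0 ≤ x →
        x < Real.exp (-(Real.log (1 / ε) / ε) * Real.log (((r : ℝ) - (R : ℝ)) * γ)) →
        (Gfun R r x ε : ℝ) ≤ N0 := by
  set n : ℕ := 7 ^ R + 1 with hn
  refine ⟨(n : ℝ), (n : ℝ), by positivity, 1/3, by norm_num, ?_⟩
  intro ε hε hε3 r hRr x hx hxlt
  -- Step 1: x * n < 1
  have hγ1 : (1 : ℝ) < (n : ℝ) := by
    have h7 : 1 ≤ 7 ^ R := Nat.one_le_pow _ _ (by norm_num)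
    have : 1 < n := by omega
    exact_mod_cast this
  have hrR : (1 : ℝ) ≤ (r : ℝ) - (R : ℝ) := by
    have : (R : ℝ) + 1 ≤ r := by exact_mod_cast hRr
    linarith
  have hlogγ : 0 < Real.log (n : ℝ) := Real.log_pos hγ1
  have hL : Real.log (n : ℝ) ≤ Real.log (((r : ℝ) - R) * n) := by
    apply Real.log_le_log (by positivity)
    nlinarith
  have ht : 1 ≤ Real.log (1 / ε) / ε := by
    have h1ε : (3 : ℝ) ≤ 1 / ε := by
      rw [le_div_iff₀ hε]; linarith
    have : (1 : ℝ) ≤ Real.log (1 / ε) := by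
      rw [Real.le_log_iff_exp_le (by linarith)]
      calc Real.exp 1 ≤ 3 := by
            have := Real.exp_one_lt_d9; linarith
        _ ≤ 1 / ε := h1ε
    rw [le_div_iff₀ hε]
    calc 1 * ε = ε := one_mul ε
      _ ≤ 1 := by linarith
      _ ≤ Real.log (1 / ε) := this
  have hexp : Real.exp (-(Real.log (1 / ε) / ε) * Real.log (((r : ℝ) - R) * (n : ℝ)))
      ≤ 1 / (n : ℝ) := by
    have h1 : Real.log (n : ℝ) ≤ (Real.log (1 / ε) / ε) * Real.log (((r : ℝ) - R) * n) := by
      nlinarith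
    calc Real.exp (-(Real.log (1 / ε) / ε) * Real.log (((r : ℝ) - R) * n))
        ≤ Real.exp (-Real.log (n : ℝ)) := by
          apply Real.exp_le_exp.2; linarith
      _ = 1 / (n : ℝ) := by
          rw [Real.exp_neg, Real.exp_log (by positivity)]
          rw [one_div]
  have hxn : x * (n : ℝ) ≤ 1 := by
    have hxlt' : x < 1 / (n : ℝ) := lt_of_lt_of_le hxlt hexp
    calc x * (n : ℝ) ≤ (1 / (n : ℝ)) * n := by
          apply mul_le_mul_of_nonneg_right (le_of_lt hxlt') (by positivity)
      _ = 1 := by field_simp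
  -- Step 2: n is in the set
  have hmem : n ∈ { m : ℕ | ∀ col : Sym2 (Fin m) → Fin r,
      restrictedOn col Finset.univ R r x ε →
      ∃ Q : Finset (Fin r), Q.card ≤ 3 ∧ ¬ (unionGraph col Q).Colorable 7 } := by
    intro col hrestr
    obtain ⟨hcols, C2, hC2card, hC2sparse⟩ := hrestr
    by_contra hQ
    push_neg at hQ
    -- every singleton union graph is 7-colorable
    have hcolorable : ∀ a : Fin r, (unionGraph col {a}).Colorable 7 := by
      intro a
      exact hQ {a} (by simp)
    let c : ∀ a : Fin r, (unionGraph col {a}).Coloring (Fin 7) :=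
      fun a => (hcolorable a).some
    -- the injection
    let f : Fin n → (↥(C2ᶜ) → Fin 7) := fun v b => c b.1 v
    have hinj : Function.Injective f := by
      intro v w hvw
      by_contra hne
      set b := col s(v, w) with hb
      have hbC2 : b ∉ C2 := by
        intro hbmem
        exact sparse_no_edge col b hε hxn (hC2sparse b hbmem) v w
          ⟨hne, Or.inl hb.symm⟩
      have hadj : (unionGraph col {b}).Adj v w := ⟨hne, Or.inl (by simp [hb])⟩
      have := (c b).valid hadj
      have heq : f v ⟨b, by simp [hbC2]⟩ = f w ⟨b, by simp [hbC2]⟩ := by rw [hvw]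
      exact this heq
    have hcard := Fintype.card_le_of_injective f hinj
    rw [Fintype.card_fin, Fintype.card_fun, Fintype.card_fin, Fintype.card_coe] at hcard
    have hC2le : C2.card ≤ r := by
      simpa using Finset.card_le_card (Finset.subset_univ C2)
    have hDcard : (C2ᶜ).card ≤ R := by
      rw [Finset.card_compl, Fintype.card_fin]
      omega
    have : 7 ^ (C2ᶜ).card ≤ 7 ^ R := Nat.pow_le_pow_right (by norm_num) hDcard
    omega
  have hle : Gfun R r x ε ≤ n := Nat.sInf_le hmem
  exact_mod_cast hle
end

section
/- Let q ≥ 2 be an integer, let 0 < ε and 0 < a be reals, and let G be a graph with vertex set V. Then either (1) there exists a subset V' ⊆ V with |V'| ≥ (1 - 2^{q+2}ε)|V| such that G contains no balanced ε-dense pair with both parts contained in V' and both parts of size between a|V| and ε|V|, or (2) there exists a family ℒ of pairwise vertex-disjoint balanced ε-dense pairs of G with parts of size between a|V| and ε|V| satisfying 2^{q+2}ε|V| ≤ Vol(ℒ) ≤ 2^{q+3}ε|V|, where Vol(ℒ) denotes the number of vertices covered by the pairs in ℒ. -/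
open Finset

/-- Dichotomy for non-properly-shattered sets (Lemma `nonshatter` of the paper), stated for a
graph `G` on the vertex set `Fin n`: either a large subset `V'` contains no balanced `ε`-dense
pair with parts of size between `a·n` and `ε·n`, or there is a family of pairwise vertex-disjoint
balanced `ε`-dense pairs of that size with total volume between `2^{q+2} ε n` and `2^{q+3} ε n`. -/
theorem stmt7 (q : ℕ) (hq : 2 ≤ q) (ε a : ℝ) (hε : 0 < ε) (ha : 0 < a)
    (n : ℕ) (G : SimpleGraph (Fin n)) :
    (∃ V' : Finset (Fin n),
      (1 - 2 ^ (q + 2) * ε) * (n : ℝ) ≤ (V'.card : ℝ) ∧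
      ¬ ∃ V1 V2 : Finset (Fin n), V1 ⊆ V' ∧ V2 ⊆ V' ∧ V1.card = V2.card ∧
          a * n ≤ (V1.card : ℝ) ∧ (V1.card : ℝ) ≤ ε * n ∧
          a * n ≤ (V2.card : ℝ) ∧ (V2.card : ℝ) ≤ ε * n ∧
          densePair G ε V1 V2) ∨
    (∃ P : Finset (Finset (Fin n) × Finset (Fin n)),
      (∀ p ∈ P, p.1.card = p.2.card ∧
          a * n ≤ (p.1.card : ℝ) ∧ (p.1.card : ℝ) ≤ ε * n ∧ densePair G ε p.1 p.2) ∧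
      (∀ p ∈ P, ∀ p' ∈ P, p ≠ p' → Disjoint (p.1 ∪ p.2) (p'.1 ∪ p'.2)) ∧
      2 ^ (q + 2) * ε * n ≤ (((P.sup fun p => p.1 ∪ p.2).card : ℕ) : ℝ) ∧
      (((P.sup fun p => p.1 ∪ p.2).card : ℕ) : ℝ) ≤ 2 ^ (q + 3) * ε * n) := by
  classical
  rcases Nat.eq_zero_or_pos n with hn | hn
  · -- n = 0 : trivial left disjunct
    subst hn
    left
    refine ⟨∅, by simp, ?_⟩
    rintro ⟨V1, V2, hV1, hV2, -, -, -, -, -, hd⟩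
    have h1 : V1 = ∅ := Finset.subset_empty.mp hV1
    have h2 : V2 = ∅ := Finset.subset_empty.mp hV2
    subst h1; subst h2
    obtain ⟨u, hu, -⟩ := hd.2 ∅ (by simp) ∅ (by simp) (by simp) (by simp)
    exact absurd hu (by simp)
  · -- main case
    have hnpos : (0 : ℝ) < n := by exact_mod_cast hn
    set B : ℝ := 2 ^ (q + 3) * ε * n with hB
    set A : ℝ := 2 ^ (q + 2) * ε * n with hA
    have hApos : 0 < A := by positivity
    have hAB : A + 2 * ε * n ≤ B := by
      have h2 : (2 : ℝ) ≤ 2 ^ (q + 2) := by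
        calc (2:ℝ) = 2 ^ 1 := by norm_num
        _ ≤ 2 ^ (q + 2) := by
          apply pow_le_pow_right₀ (by norm_num)
          omega
      have : (2 : ℝ) * ε * n + 2 ^ (q + 2) * ε * n ≤ 2 ^ (q + 2) * ε * n + 2 ^ (q + 2) * ε * n := by
        have := mul_le_mul_of_nonneg_right (mul_le_mul_of_nonneg_right h2 hε.le) hnpos.le
        linarith
      have hpow : (2 : ℝ) ^ (q + 2) + 2 ^ (q + 2) = 2 ^ (q + 3) := by ring
      rw [hA, hB]
      nlinarith [hε.le, hnpos.le]
    -- the volume function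
    set vol : Finset (Finset (Fin n) × Finset (Fin n)) → ℕ :=
      fun P => (P.sup fun p => p.1 ∪ p.2).card with hvol
    set good : Finset (Finset (Fin n) × Finset (Fin n)) → Prop := fun P =>
      (∀ p ∈ P, p.1.card = p.2.card ∧
          a * n ≤ (p.1.card : ℝ) ∧ (p.1.card : ℝ) ≤ ε * n ∧ densePair G ε p.1 p.2) ∧
      (∀ p ∈ P, ∀ p' ∈ P, p ≠ p' → Disjoint (p.1 ∪ p.2) (p'.1 ∪ p'.2)) ∧
      ((vol P : ℝ) ≤ B) with hgood
    set T : Finset (Finset (Finset (Fin n) × Finset (Fin n))) :=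
      Finset.univ.filter good with hT
    have hempty : (∅ : Finset (Finset (Fin n) × Finset (Fin n))) ∈ T := by
      rw [hT, Finset.mem_filter]
      refine ⟨Finset.mem_univ _, ?_, ?_, ?_⟩
      · intro p hp; exact absurd hp (by simp)
      · intro p hp; exact absurd hp (by simp)
      · have h0 : vol (∅ : Finset (Finset (Fin n) × Finset (Fin n))) = 0 := by simp [hvol]
        rw [h0]
        push_cast
        positivity
    obtain ⟨P, hPT, hPmax⟩ := Finset.exists_max_image T vol ⟨∅, hempty⟩
    rw [hT, Finset.mem_filter] at hPT
    obtain ⟨-, hP1, hP2, hP3⟩ := hPT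
    by_cases hbig : A ≤ (vol P : ℝ)
    · right
      exact ⟨P, hP1, hP2, hbig, hP3⟩
    · push_neg at hbig
      left
      set U : Finset (Fin n) := P.sup fun p => p.1 ∪ p.2 with hU
      refine ⟨Uᶜ, ?_, ?_⟩
      · have hcc : (Uᶜ.card : ℝ) = n - U.card := by
          rw [Finset.card_compl]
          have := Finset.card_le_univ U
          rw [Fintype.card_fin, Nat.cast_sub (by simpa using this)]
        rw [hcc]
        have : (U.card : ℝ) < A := hbig
        rw [hA] at this
        nlinarith
      · rintro ⟨V1, V2, hV1, hV2, hcard, ha1, he1, ha2, he2, hd⟩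
        -- V1 ∪ V2 is disjoint from U
        have hdisj : Disjoint (V1 ∪ V2) U := by
          rw [Finset.disjoint_left]
          intro x hx hxU
          have : x ∈ Uᶜ := by
            rcases Finset.mem_union.mp hx with h | h
            · exact hV1 h
            · exact hV2 h
          exact (Finset.mem_compl.mp this) hxU
        set p : Finset (Fin n) × Finset (Fin n) := (V1, V2) with hp
        have hV1ne : V1.Nonempty := by
          rw [← Finset.card_pos]
          have h0 : (0 : ℝ) < (V1.card : ℝ) :=
            lt_of_lt_of_le (by positivity : (0 : ℝ) < a * n) ha1
          exact_mod_cast h0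
        have hpnotP : p ∉ P := by
          intro hmem
          have hsub : p.1 ∪ p.2 ⊆ U := Finset.le_sup (f := fun p => p.1 ∪ p.2) hmem
          obtain ⟨x, hx⟩ := hV1ne
          have hxU : x ∈ U := hsub (Finset.mem_union_left _ hx)
          exact (Finset.disjoint_left.mp hdisj (Finset.mem_union_left _ hx)) hxU
        have hvolins : vol (insert p P) = (V1 ∪ V2).card + vol P := by
          rw [hvol]
          simp only [Finset.sup_insert]
          exact Finset.card_union_of_disjoint hdisj
        have hsize : ((V1 ∪ V2).card : ℝ) ≤ 2 * ε * n := by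
          have := Finset.card_union_le V1 V2
          have h2 : (V2.card : ℝ) ≤ ε * n := by rw [← hcard]; exact he1
          calc ((V1 ∪ V2).card : ℝ) ≤ (V1.card : ℝ) + V2.card := by exact_mod_cast this
          _ ≤ ε * n + ε * n := by linarith
          _ = 2 * ε * n := by ring
        have hinsT : insert p P ∈ T := by
          rw [hT, Finset.mem_filter]
          refine ⟨Finset.mem_univ _, ?_, ?_, ?_⟩
          · intro p' hp'
            rcases Finset.mem_insert.mp hp' with rfl | hp'
            · exact ⟨hcard, ha1, he1, hd⟩
            · exact hP1 p' hp'
          · intro p1 hp1 p2 hp2 hne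
            rcases Finset.mem_insert.mp hp1 with rfl | hp1 <;>
              rcases Finset.mem_insert.mp hp2 with rfl | hp2
            · exact absurd rfl hne
            · exact hdisj.mono_right (Finset.le_sup (f := fun p => p.1 ∪ p.2) hp2)
            · exact (hdisj.mono_right (Finset.le_sup (f := fun p => p.1 ∪ p.2) hp1)).symm
            · exact hP2 p1 hp1 p2 hp2 hne
          · rw [hvolins]
            push_cast
            calc ((V1 ∪ V2).card : ℝ) + vol P ≤ 2 * ε * n + A := by linarith
            _ ≤ B := by linarith
        have hle := hPmax _ hinsT
        rw [hvolins] at hle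
        have : 0 < (V1 ∪ V2).card :=
          Finset.card_pos.mpr ⟨hV1ne.choose, Finset.mem_union_left _ hV1ne.choose_spec⟩
        omega
end

section
/- For all integers r ≥ 2, p ≥ 3, and q ≥ 3, the generalized Ramsey numbers satisfy the recurrence F(r, p, q) ≤ r · F(r, p-1, q-1). -/
open Finset

/-- The generalized Ramsey number `F(r,p,q)` : the minimum `n` such that every edge-coloring
of `K_n` with `r` colors admits a set of `p` vertices whose internal edges receive at most
`q - 1` distinct colors. -/
noncomputable def Fgen (r p q : ℕ) : ℕ :=
  sInf { n : ℕ | ∀ col : Sym2 (Fin n) → Fin r,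
    ∃ S : Finset (Fin n), S.card = p ∧ (colorsOn col S).card ≤ q - 1 }

def Good (r n p c : ℕ) : Prop := ∀ col : Sym2 (Fin n) → Fin r,
  ∃ S : Finset (Fin n), S.card = p ∧ (colorsOn col S).card ≤ c

lemma pullback {r m n p c : ℕ} (h : Good r m p c) (f : Fin m → Fin n)
    (hf : Function.Injective f) (col : Sym2 (Fin n) → Fin r) :
    ∃ S : Finset (Fin n), S.card = p ∧ (↑S ⊆ Set.range f) ∧ (colorsOn col S).card ≤ c := by
  obtain ⟨S₀, hcard, hcol⟩ := h (fun s => col (s.map f))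
  refine ⟨S₀.image f, by rw [Finset.card_image_of_injective _ hf, hcard], ?_, ?_⟩
  · intro x hx
    simp only [coe_image, Set.mem_image, mem_coe] at hx
    obtain ⟨a, -, rfl⟩ := hx
    exact ⟨a, rfl⟩
  · refine le_trans (Finset.card_le_card ?_) hcol
    intro x hx
    simp only [colorsOn, Finset.mem_image, Finset.mem_filter] at hx ⊢
    obtain ⟨s, ⟨hs, hd⟩, rfl⟩ := hx
    induction s using Sym2.ind with
    | _ a b =>
      rw [Finset.mk_mem_sym2_iff] at hs
      obtain ⟨a', -, rfl⟩ := Finset.mem_image.mp hs.1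
      obtain ⟨b', hb', rfl⟩ := Finset.mem_image.mp hs.2
      have ha' : a' ∈ S₀ := by
        obtain ⟨a₂, ha₂, he⟩ := Finset.mem_image.mp hs.1
        exact (hf he) ▸ ha₂
      refine ⟨s(a', b'), ⟨Finset.mk_mem_sym2_iff.mpr ⟨ha', hb'⟩, ?_⟩, ?_⟩
      · simp only [Sym2.mk_isDiag_iff] at hd ⊢
        exact fun e => hd (congrArg f e)
      · simp [Sym2.map_pair_eq]

def rfn (r : ℕ) : ℕ → ℕ
  | 0 => 1
  | t+1 => r * rfn r t + 1

lemma chain {r : ℕ} (hr : 1 ≤ r) : ∀ (t n : ℕ) (col : Sym2 (Fin n) → Fin r)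
    (A : Finset (Fin n)), rfn r t ≤ A.card →
    ∃ (V : Finset (Fin n)) (g : Fin n → Fin r), V ⊆ A ∧ V.card = t ∧
      ∀ x ∈ V, ∀ y ∈ V, x < y → col s(x, y) = g x := by
  intro t
  induction t with
  | zero =>
    intro n col A hA
    exact ⟨∅, fun _ => ⟨0, hr⟩, by simp, by simp, by simp⟩
  | succ t ih =>
    intro n col A hA
    have hrf : 1 ≤ rfn r (t+1) := Nat.succ_le_succ (Nat.zero_le _)
    have hA0 : A.Nonempty := Finset.card_pos.mp (le_trans hrf hA)
    set v := A.min' hA0 with hv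
    have hne : Nonempty (Fin r) := ⟨⟨0, hr⟩⟩
    have maps : ∀ w ∈ A.erase v, (col s(v, w)) ∈ (Finset.univ : Finset (Fin r)) :=
      fun _ _ => Finset.mem_univ _
    have hcard : (Finset.univ : Finset (Fin r)).card * rfn r t ≤ (A.erase v).card := by
      rw [Finset.card_univ, Fintype.card_fin, Finset.card_erase_of_mem (A.min'_mem hA0)]
      simp only [rfn] at hA
      omega
    obtain ⟨c, -, hc⟩ := Finset.exists_le_card_fiber_of_mul_le_card_of_maps_to maps
      Finset.univ_nonempty hcard
    obtain ⟨V', g', hsub, hVcard, hprop⟩ := ih n col _ hc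
    have hsub' : V' ⊆ A.erase v := hsub.trans (Finset.filter_subset _ _)
    have hvV' : v ∉ V' := fun h => (Finset.mem_erase.mp (hsub' h)).1 rfl
    refine ⟨insert v V', fun x => if x = v then c else g' x, ?_, ?_, ?_⟩
    · exact Finset.insert_subset (A.min'_mem hA0)
        (hsub'.trans (Finset.erase_subset _ _))
    · rw [Finset.card_insert_of_notMem hvV', hVcard]
    · intro x hx y hy hxy
      rcases Finset.mem_insert.mp hx with rfl | hx'
      · show col s(v, y) = if v = v then c else g' v
        rw [if_pos rfl]
        have hy' : y ∈ V' := by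
          rcases Finset.mem_insert.mp hy with rfl | h
          · exact absurd hxy (lt_irrefl _)
          · exact h
        exact (Finset.mem_filter.mp (hsub hy')).2
      · have hxv : x ≠ v := fun h => hvV' (h ▸ hx')
        show col s(x, y) = if x = v then c else g' x
        rw [if_neg hxv]
        have hy' : y ∈ V' := by
          rcases Finset.mem_insert.mp hy with rfl | h
          · exact absurd (lt_of_le_of_lt (A.min'_le x ((Finset.erase_subset _ _) (hsub' hx'))) hxy)
              (lt_irrefl _)
          · exact h
        exact hprop x hx' y hy' hxy

lemma ramsey {r : ℕ} (hr : 1 ≤ r) (p : ℕ) : ∃ n, Good r n p 1 := by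
  refine ⟨rfn r (r * p + 1), fun col => ?_⟩
  obtain ⟨V, g, -, hVcard, hprop⟩ := chain hr (r * p + 1) _ col Finset.univ
    (by rw [Finset.card_univ, Fintype.card_fin])
  have hne : Nonempty (Fin r) := ⟨⟨0, hr⟩⟩
  have maps : ∀ w ∈ V, g w ∈ (Finset.univ : Finset (Fin r)) := fun _ _ => Finset.mem_univ _
  obtain ⟨c, -, hc⟩ := Finset.exists_lt_card_fiber_of_mul_lt_card_of_maps_to (n := p) maps
    (by rw [Finset.card_univ, Fintype.card_fin, hVcard]; omega)
  obtain ⟨S, hS, hScard⟩ := Finset.exists_subset_card_eq (le_of_lt hc)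
  refine ⟨S, hScard, ?_⟩
  have : colorsOn col S ⊆ {c} := by
    intro x hx
    simp only [colorsOn, Finset.mem_image, Finset.mem_filter] at hx
    obtain ⟨s, ⟨hs, hd⟩, rfl⟩ := hx
    induction s using Sym2.ind with
    | _ a b =>
      rw [Finset.mk_mem_sym2_iff] at hs
      have ha := Finset.mem_filter.mp (hS hs.1)
      have hb := Finset.mem_filter.mp (hS hs.2)
      have hab : a ≠ b := by simpa [Sym2.mk_isDiag_iff] using hd
      rcases lt_or_gt_of_ne hab with h | h
      · rw [hprop a ha.1 b hb.1 h, ha.2]; exact Finset.mem_singleton_self _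
      · rw [Sym2.eq_swap, hprop b hb.1 a ha.1 h, hb.2]; exact Finset.mem_singleton_self _
  exact le_trans (Finset.card_le_card this) (by simp)

lemma step {r m p c : ℕ} (hr : 2 ≤ r) (hm : 1 ≤ m) (h : Good r m p c) :
    Good r (r * m) (p + 1) (c + 1) := by
  intro col
  have hn : 0 < r * m := Nat.mul_pos (by omega) hm
  set v : Fin (r * m) := ⟨0, hn⟩ with hv
  have hne : Nonempty (Fin r) := ⟨⟨0, by omega⟩⟩
  have maps : ∀ w ∈ Finset.univ.erase v, (col s(v, w)) ∈ (Finset.univ : Finset (Fin r)) :=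
    fun _ _ => Finset.mem_univ _
  obtain ⟨c₀, -, hc₀⟩ := Finset.exists_lt_card_fiber_of_mul_lt_card_of_maps_to (n := m - 1) maps
    (by
      rw [Finset.card_univ, Fintype.card_fin, Finset.card_erase_of_mem (Finset.mem_univ v),
        Finset.card_univ, Fintype.card_fin]
      have : r * (m - 1) + r = r * m := by
        rw [← Nat.mul_succ]; congr 1; omega
      omega)
  have hc₀' : m ≤ (Finset.filter (fun w => col s(v, w) = c₀) (Finset.univ.erase v)).card := by
    omega
  obtain ⟨B, hB, hBcard⟩ := Finset.exists_subset_card_eq hc₀'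
  have f := B.orderIsoOfFin hBcard
  have hfinj : Function.Injective (fun i => (f i : Fin (r * m))) :=
    fun a b e => f.injective (Subtype.ext e)
  obtain ⟨S, hScard, hSrange, hScol⟩ := pullback h _ hfinj col
  have hSB : ∀ x ∈ S, x ∈ B := by
    intro x hx
    obtain ⟨i, hi⟩ := hSrange hx
    rw [← hi]; exact (f i).2
  have hSv : v ∉ S := by
    intro hx
    exact (Finset.mem_erase.mp ((Finset.filter_subset _ _) (hB (hSB v hx)))).1 rfl
  refine ⟨insert v S, ?_, ?_⟩
  · rw [Finset.card_insert_of_notMem hSv, hScard]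
  · have hsub : colorsOn col (insert v S) ⊆ insert c₀ (colorsOn col S) := by
      intro x hx
      simp only [colorsOn, Finset.mem_image, Finset.mem_filter] at hx
      obtain ⟨s, ⟨hs, hd⟩, rfl⟩ := hx
      induction s using Sym2.ind with
      | _ a b =>
        rw [Finset.mk_mem_sym2_iff] at hs
        have hab : a ≠ b := by simpa [Sym2.mk_isDiag_iff] using hd
        have key : ∀ w ∈ S, col s(v, w) = c₀ := fun w hw =>
          (Finset.mem_filter.mp (hB (hSB w hw))).2
        rcases Finset.mem_insert.mp hs.1 with rfl | ha
        · rcases Finset.mem_insert.mp hs.2 with rfl | hb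
          · exact absurd rfl hab
          · rw [key b hb]; exact Finset.mem_insert_self _ _
        · rcases Finset.mem_insert.mp hs.2 with rfl | hb
          · rw [Sym2.eq_swap, key a ha]; exact Finset.mem_insert_self _ _
          · refine Finset.mem_insert_of_mem ?_
            simp only [colorsOn, Finset.mem_image, Finset.mem_filter]
            exact ⟨s(a, b), ⟨Finset.mk_mem_sym2_iff.mpr ⟨ha, hb⟩, hd⟩, rfl⟩
    exact le_trans (Finset.card_le_card hsub)
      (le_trans (Finset.card_insert_le _ _) (by omega))

/-- The recurrence of Erdős and Gyárfás: `F(r, p, q) ≤ r · F(r, p-1, q-1)`. -/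
theorem stmt11 (r p q : ℕ) (hr : 2 ≤ r) (hp : 3 ≤ p) (hq : 3 ≤ q) :
    Fgen r p q ≤ r * Fgen r (p - 1) (q - 1) := by
  have hr1 : 1 ≤ r := by omega
  have hTne : { n : ℕ | Good r n (p - 1) (q - 1 - 1) }.Nonempty := by
    obtain ⟨n, hn⟩ := ramsey hr1 (p - 1)
    exact ⟨n, fun col => by
      obtain ⟨S, h1, h2⟩ := hn col
      exact ⟨S, h1, le_trans h2 (by omega)⟩⟩
  have hFeq : Fgen r (p - 1) (q - 1) = sInf { n : ℕ | Good r n (p - 1) (q - 1 - 1) } := rfl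
  have hmem : Good r (Fgen r (p - 1) (q - 1)) (p - 1) (q - 1 - 1) := by
    rw [hFeq]; exact Nat.sInf_mem hTne
  set m := Fgen r (p - 1) (q - 1) with hm
  have hm1 : 1 ≤ m := by
    by_contra h
    have hm0 : m = 0 := by omega
    obtain ⟨S, hS, -⟩ := hmem (fun _ => ⟨0, by omega⟩)
    have := Finset.card_le_card (Finset.subset_univ S)
    rw [hS, Finset.card_univ] at this
    simp [hm0] at this
    omega
  have hgood : Good r (r * m) (p - 1 + 1) (q - 1 - 1 + 1) := step hr hm1 hmem
  have hgood' : Good r (r * m) p (q - 1) := by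
    have e1 : p - 1 + 1 = p := by omega
    have e2 : q - 1 - 1 + 1 = q - 1 := by omega
    rwa [e1, e2] at hgood
  exact Nat.sInf_le hgood'
end

section
/- For all integers r ≥ 1, p ≥ 3, and q ≥ 2, one has F_χ(r, p, q) ≤ (p-1)^{⌈r/(q-1)⌉} + 1. Equivalently, every chromatic-(p,q)-coloring of K_n with r colors satisfies n ≤ (p-1)^{⌈r/(q-1)⌉}. -/
/-!
Split the `r` colors into `t = ⌈r/(q-1)⌉` blocks of at most `q - 1` colors. The union of the
color classes in each block has a proper `(p-1)`-coloring, and recording for every vertex its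
`t` block colors is injective, because any two vertices are joined by an edge whose color lies
in some block. Hence `n ≤ (p-1)^t`.
-/

open Finset

/-- A chromatic-(p,q)-coloring : the union of any `q - 1` color classes has chromatic
number at most `p - 1`. -/
def chromaticPQ {n N : ℕ} (col : Sym2 (Fin n) → Fin N) (p q : ℕ) : Prop :=
  ∀ Q : Finset (Fin N), Q.card ≤ q - 1 → (unionGraph col Q).Colorable (p - 1)

/-- `Fchi r p q` : the minimum `n` such that every edge-coloring of `K_n` with `r` colors
contains a subgraph of chromatic number at least `p` whose edges receive at most `q - 1`
distinct colors. -/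
noncomputable def Fchi (r p q : ℕ) : ℕ :=
  sInf { n : ℕ | ∀ col : Sym2 (Fin n) → Fin r,
    ∃ Q : Finset (Fin r), Q.card ≤ q - 1 ∧ ¬ (unionGraph col Q).Colorable (p - 1) }

theorem SimpleGraph.card_le_pow_of_forall_adj {V ι : Type*} [Fintype V] [Fintype ι] {k : ℕ}
    (G : ι → SimpleGraph V) (hG : ∀ i, (G i).Colorable k)
    (hcover : ∀ v w, v ≠ w → ∃ i, (G i).Adj v w) :
    Fintype.card V ≤ k ^ Fintype.card ι := by
  classical
  let C : ∀ i, (G i).Coloring (Fin k) := fun i => (hG i).some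
  have hinj : Function.Injective fun v i => C i v := by
    intro v w hvw
    by_contra hne
    obtain ⟨i, hadj⟩ := hcover v w hne
    exact (C i).valid hadj (congrFun hvw i)
  simpa using Fintype.card_le_of_injective _ hinj

theorem Fin.card_filter_div_eq_le {r m : ℕ} (hm : 0 < m) (i : ℕ) :
    #{c : Fin r | c.val / m = i} ≤ m := by
  calc #{c : Fin r | c.val / m = i}
      ≤ #(Ico (i * m) (i * m + m)) := by
        refine card_le_card_of_injOn Fin.val (fun c hc => ?_) Fin.val_injective.injOn
        have hc : c.val / m = i := (mem_filter.mp hc).2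
        simp only [coe_Ico, Set.mem_Ico]
        constructor
        · exact (Nat.le_div_iff_mul_le hm).mp hc.ge
        · rw [← Nat.succ_mul]
          exact (Nat.div_lt_iff_lt_mul hm).mp (Nat.lt_succ_of_le hc.le)
    _ = m := by simp

theorem Fin.exists_cover_of_le_mul {r t m : ℕ} (hm : 0 < m) (hr : r ≤ t * m) :
    ∃ Q : Fin t → Finset (Fin r), (∀ i, #(Q i) ≤ m) ∧ ∀ c, ∃ i, c ∈ Q i := by
  refine ⟨fun i => {c | c.val / m = i.val}, fun i => Fin.card_filter_div_eq_le hm i, fun c => ?_⟩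
  have hc : c.val / m < t := Nat.div_lt_of_lt_mul (by rw [Nat.mul_comm]; omega)
  exact ⟨⟨c.val / m, hc⟩, by simp⟩

theorem Nat.le_ceil_div_mul {m : ℕ} (hm : 0 < m) (r : ℕ) :
    r ≤ ⌈(r : ℝ) / m⌉₊ * m := by
  have hm' : (0 : ℝ) < m := by exact_mod_cast hm
  exact_mod_cast (div_le_iff₀ hm').mp (Nat.le_ceil ((r : ℝ) / m))

theorem chromaticPQ.card_le_pow {n r p q t : ℕ} {col : Sym2 (Fin n) → Fin r}
    (h : chromaticPQ col p q) (hq : 2 ≤ q) (hr : r ≤ t * (q - 1)) :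
    n ≤ (p - 1) ^ t := by
  obtain ⟨Q, hQcard, hQcover⟩ := Fin.exists_cover_of_le_mul (by omega) hr
  have hadj : ∀ v w, v ≠ w → ∃ i, (unionGraph col (Q i)).Adj v w := fun v w hvw =>
    let ⟨i, hi⟩ := hQcover (col s(v, w))
    ⟨i, hvw, Or.inl hi⟩
  simpa using SimpleGraph.card_le_pow_of_forall_adj _ (fun i => h (Q i) (hQcard i)) hadj

theorem Fchi_le_of_forall_not_chromaticPQ {r p q n : ℕ}
    (h : ∀ col : Sym2 (Fin n) → Fin r, ¬ chromaticPQ col p q) : Fchi r p q ≤ n := by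
  refine Nat.sInf_le fun col => ?_
  simpa [chromaticPQ] using h col

theorem stmt13_general (r p q : ℕ) (hq : 2 ≤ q) :
    Fchi r p q ≤ (p - 1) ^ (Nat.ceil ((r : ℝ) / ((q : ℝ) - 1))) + 1 ∧
    ∀ (n : ℕ) (col : Sym2 (Fin n) → Fin r), chromaticPQ col p q →
      n ≤ (p - 1) ^ (Nat.ceil ((r : ℝ) / ((q : ℝ) - 1))) := by
  have hq_cast : (q : ℝ) - 1 = ((q - 1 : ℕ) : ℝ) := by
    rw [Nat.cast_sub (by omega), Nat.cast_one]
  have hbound : ∀ (n : ℕ) (col : Sym2 (Fin n) → Fin r), chromaticPQ col p q →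
      n ≤ (p - 1) ^ (Nat.ceil ((r : ℝ) / ((q : ℝ) - 1))) := fun n col h =>
    h.card_le_pow hq (hq_cast ▸ Nat.le_ceil_div_mul (by omega) r)
  refine ⟨Fchi_le_of_forall_not_chromaticPQ fun col h => ?_, hbound⟩
  have := hbound _ col h
  omega

/-- The product bound: `F_χ(r,p,q) ≤ (p-1)^{⌈r/(q-1)⌉} + 1`; equivalently every
chromatic-(p,q)-coloring of `K_n` with `r` colors has `n ≤ (p-1)^{⌈r/(q-1)⌉}`. -/
theorem stmt13 (r p q : ℕ) (hr : 1 ≤ r) (hp : 3 ≤ p) (hq : 2 ≤ q) :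
    Fchi r p q ≤ (p - 1) ^ (Nat.ceil ((r : ℝ) / ((q : ℝ) - 1))) + 1 ∧
    ∀ (n : ℕ) (col : Sym2 (Fin n) → Fin r), chromaticPQ col p q →
      n ≤ (p - 1) ^ (Nat.ceil ((r : ℝ) / ((q : ℝ) - 1))) :=
  stmt13_general r p q hq
end

section
/- Let r ≥ q ≥ 1 be integers. Color the edges of the complete graph on vertex set {0, 1, …, 2^r - 1} by giving the edge {v, w} the color i ∈ {1, …, r} when the r-digit binary expansions of v and w first differ in the i-th digit (i.e., i is the position, counted from the most significant of r digits, of the highest-order bit in which v and w differ). Then every color class is a bipartite graph, and for every set Q of q colors the union of the color classes of the colors in Q has chromatic number at most 2^q. Consequently, F_χ(r, 2^q + 1, q+1) ≥ 2^r + 1. -/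
open Finset

/-- The binary coloring of `K_{2^r}` : the edge `{v, w}` receives the color recording
the position (counted from the most significant of `r` binary digits, `0`-indexed here,
so `0`-indexed position `i` corresponds to the `1`-indexed digit `i+1`) of the
highest-order bit in which `v` and `w` differ. -/
def binCol (r : ℕ) (hr : 0 < r) : Sym2 (Fin (2 ^ r)) → Fin r :=
  Sym2.lift ⟨fun v w => ⟨r - 1 - Nat.log2 (v.val ^^^ w.val), by omega⟩,
    fun v w => by simp [Nat.xor_comm]⟩

/-!
The color of an edge `{v, w}` names the leading bit of `v ^^^ w`, a position where `v` and `w`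
differ; so reading off the bits of a vertex at the positions in `Q` properly colors the union of
the classes in `Q` with `2 ^ |Q|` colors. Restricting to fewer vertices preserves this, which keeps
every `n ≤ 2 ^ r` out of the set defining `F_χ`. That set is nonempty (so its infimum is not the
junk value `0`): if every single class were `(p - 1)`-colorable, the tuple of these colorings would
inject the vertices into `Fin r → Fin (p - 1)`.
-/

theorem Nat.testBit_log2_xor_ne {v w : ℕ} (h : v ≠ w) :
    v.testBit (v ^^^ w).log2 ≠ w.testBit (v ^^^ w).log2 := by
  have hbit := Nat.testBit_log2 (mt Nat.xor_eq_zero_iff.mp h)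
  rw [Nat.testBit_xor] at hbit
  intro heq
  simp [heq] at hbit

theorem unionGraph_adj {n N : ℕ} {col : Sym2 (Fin n) → Fin N} {Q : Finset (Fin N)}
    {v w : Fin n} :
    (unionGraph col Q).Adj v w ↔ v ≠ w ∧ col s(v, w) ∈ Q := by
  rw [unionGraph, SimpleGraph.fromRel_adj, Sym2.eq_swap, or_self]

theorem colorGraph_eq_unionGraph_singleton {n N : ℕ} (col : Sym2 (Fin n) → Fin N) (a : Fin N) :
    colorGraph col a = unionGraph col {a} := by
  simp only [colorGraph, unionGraph, Finset.mem_singleton]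

theorem unionGraph_comp_map {m n N : ℕ} (col : Sym2 (Fin n) → Fin N) (Q : Finset (Fin N))
    (f : Fin m ↪ Fin n) :
    unionGraph (fun e => col (e.map f)) Q = (unionGraph col Q).comap f := by
  ext v w
  simp only [unionGraph_adj, SimpleGraph.comap_adj, Sym2.map_mk, ne_eq, f.injective.eq_iff]

section binCol

variable {r : ℕ} (hr : 0 < r)

theorem binCol_bitIndex (v w : Fin (2 ^ r)) (h : v ≠ w) :
    r - 1 - (binCol r hr s(v, w) : ℕ) = (v.val ^^^ w.val).log2 := by
  have hlt : (v.val ^^^ w.val).log2 < r :=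
    (Nat.log2_lt (mt Nat.xor_eq_zero_iff.mp (Fin.val_ne_of_ne h))).mpr
      (Nat.xor_lt_two_pow v.isLt w.isLt)
  show r - 1 - (r - 1 - (v.val ^^^ w.val).log2) = _
  omega

def binColoring (Q : Finset (Fin r)) : (unionGraph (binCol r hr) Q).Coloring (Q → Bool) :=
  SimpleGraph.Coloring.mk (fun v i => v.val.testBit (r - 1 - i.val)) fun {v w} hvw heq => by
    obtain ⟨hne, hQ⟩ := unionGraph_adj.mp hvw
    have hbit := congrFun heq ⟨_, hQ⟩
    simp only [binCol_bitIndex hr v w hne] at hbit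
    exact Nat.testBit_log2_xor_ne (Fin.val_ne_of_ne hne) hbit

theorem unionGraph_binCol_colorable (Q : Finset (Fin r)) :
    (unionGraph (binCol r hr) Q).Colorable (2 ^ Q.card) := by
  simpa using (binColoring hr Q).colorable

end binCol

section Fchi

def FchiSet (r p q : ℕ) : Set ℕ :=
  { n : ℕ | ∀ col : Sym2 (Fin n) → Fin r,
    ∃ Q : Finset (Fin r), Q.card ≤ q - 1 ∧ ¬ (unionGraph col Q).Colorable (p - 1) }

theorem Fchi_eq_sInf (r p q : ℕ) : Fchi r p q = sInf (FchiSet r p q) := rfl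

theorem FchiSet.mono {r p q m n : ℕ} (hmn : m ≤ n) (hm : m ∈ FchiSet r p q) :
    n ∈ FchiSet r p q := by
  intro col
  obtain ⟨Q, hQ, hnot⟩ := hm fun e => col (e.map (Fin.castLEEmb hmn))
  refine ⟨Q, hQ, fun hcol => hnot ?_⟩
  rw [unionGraph_comp_map]
  exact hcol.of_hom (SimpleGraph.Hom.comap _ _)

theorem pow_add_one_mem_FchiSet {r p q : ℕ} (hq : 2 ≤ q) :
    (p - 1) ^ r + 1 ∈ FchiSet r p q := by
  intro col
  by_contra! hcol
  let C (a : Fin r) : (unionGraph col {a}).Coloring (Fin (p - 1)) :=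
    (hcol {a} (by rw [card_singleton]; omega)).some
  have hinj : Function.Injective fun v a => C a v := by
    intro v w hvw
    by_contra hne
    exact (C (col s(v, w))).valid (unionGraph_adj.mpr ⟨hne, mem_singleton_self _⟩)
      (congrFun hvw _)
  simpa using Fintype.card_le_of_injective _ hinj

theorem lt_Fchi_of_colorable {r p q n : ℕ} (hq : 2 ≤ q) (col : Sym2 (Fin n) → Fin r)
    (hcol : ∀ Q : Finset (Fin r), Q.card ≤ q - 1 → (unionGraph col Q).Colorable (p - 1)) :
    n < Fchi r p q := by
  rw [Fchi_eq_sInf]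
  by_contra! hle
  obtain ⟨Q, hQ, hnot⟩ :=
    FchiSet.mono hle (Nat.sInf_mem ⟨_, pow_add_one_mem_FchiSet hq⟩) col
  exact hnot (hcol Q hQ)

end Fchi

/-- Every color class of the binary coloring is bipartite, unions of any `q` color classes
have chromatic number at most `2^q`, and consequently `F_χ(r, 2^q + 1, q + 1) ≥ 2^r + 1`. -/
theorem stmt14 (q r : ℕ) (hq : 1 ≤ q) (hqr : q ≤ r) :
    (∀ i : Fin r, (colorGraph (binCol r (hq.trans hqr)) i).Colorable 2) ∧
    (∀ Q : Finset (Fin r), Q.card = q →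
      (unionGraph (binCol r (hq.trans hqr)) Q).Colorable (2 ^ q)) ∧
    2 ^ r + 1 ≤ Fchi r (2 ^ q + 1) (q + 1) := by
  have hr : 0 < r := hq.trans hqr
  refine ⟨fun i => ?_, fun Q hQ => hQ ▸ unionGraph_binCol_colorable hr Q, ?_⟩
  · simpa [colorGraph_eq_unionGraph_singleton] using unionGraph_binCol_colorable hr {i}
  · refine lt_Fchi_of_colorable (by omega) (binCol r hr) fun Q hQ => ?_
    exact (unionGraph_binCol_colorable hr Q).mono (by simpa using Nat.pow_le_pow_right two_pos hQ)
end

section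
/- For all integers q ≥ 1 and r ≥ q such that q divides r, one has F_χ(r, 2^q + 1, q+1) = 2^r + 1. -/
open Finset

/-- The "good" coloring: color an edge by the least coordinate where the binary codes differ.
Then the union of any `q` color classes is `2 ^ q`-colorable. -/
private lemma lower_aux (q r n : ℕ) (hq : 1 ≤ q) (hqr : q ≤ r) (hn : n ≤ 2 ^ r) :
    ∃ col : Sym2 (Fin n) → Fin r,
      ∀ Q : Finset (Fin r), Q.card ≤ q → (unionGraph col Q).Colorable (2 ^ q) := by
  have hr : 0 < r := lt_of_lt_of_le hq hqr
  -- an embedding of the vertices into binary codes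
  obtain ⟨f⟩ : Nonempty (Fin n ↪ (Fin r → Bool)) := by
    apply Function.Embedding.nonempty_of_card_le
    simpa using hn
  classical
  set g : Fin n → Fin n → Fin r := fun u v =>
    if h : (Finset.univ.filter (fun i => f u i ≠ f v i)).Nonempty
    then (Finset.univ.filter (fun i => f u i ≠ f v i)).min' h
    else ⟨0, hr⟩ with hg
  have hsymm : ∀ u v, g u v = g v u := by
    intro u v
    have : (Finset.univ.filter (fun i => f u i ≠ f v i)) =
        (Finset.univ.filter (fun i => f v i ≠ f u i)) := by
      ext i; simp [ne_comm]
    simp only [hg, this]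
  -- key: if `g u v ∈ Q` and `u ≠ v`, then the restrictions of the codes to `Q` differ
  have key : ∀ (Q : Finset (Fin r)) (u v : Fin n), u ≠ v → g u v ∈ Q →
      (fun i : Q => f u i.1) ≠ (fun i : Q => f v i.1) := by
    intro Q u v huv hmem heq
    have hfne : f u ≠ f v := fun h => huv (f.injective h)
    have hne : (Finset.univ.filter (fun i => f u i ≠ f v i)).Nonempty := by
      obtain ⟨i, hi⟩ := Function.ne_iff.mp hfne
      exact ⟨i, by simpa using hi⟩
    have hguv : g u v ∈ Finset.univ.filter (fun i => f u i ≠ f v i) := by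
      rw [hg]; simp only [dif_pos hne]
      exact Finset.min'_mem _ hne
    have h1 : f u (g u v) ≠ f v (g u v) := by simpa using hguv
    exact h1 (congrFun heq ⟨g u v, hmem⟩)
  refine ⟨Sym2.lift ⟨g, hsymm⟩, ?_⟩
  intro Q hQ
  -- the coloring by restriction of the binary code to Q
  have C : (unionGraph (Sym2.lift ⟨g, hsymm⟩) Q).Coloring (Q → Bool) := by
    refine SimpleGraph.Coloring.mk (fun v => fun i : Q => f v i.1) ?_
    intro u v hadj
    rw [unionGraph, SimpleGraph.fromRel_adj] at hadj
    obtain ⟨huv, hcol⟩ := hadj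
    simp only [Sym2.lift_mk] at hcol
    rcases hcol with hc | hc
    · exact key Q u v huv hc
    · rw [hsymm] at hc
      exact key Q u v huv hc
  have := C.colorable
  rw [Fintype.card_fun, Fintype.card_coe, Fintype.card_bool] at this
  exact this.mono (Nat.pow_le_pow_right (by norm_num) hQ)

/-- If `q ∣ r` (and `1 ≤ q ≤ r`) then `F_χ(r, 2^q + 1, q + 1) = 2^r + 1`. -/
theorem stmt15 (q r : ℕ) (hq : 1 ≤ q) (hqr : q ≤ r) (hdvd : q ∣ r) :
    Fchi r (2 ^ q + 1) (q + 1) = 2 ^ r + 1 := by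
  classical
  have hq0 : 0 < q := hq
  have hrq : q * (r / q) = r := Nat.mul_div_cancel' hdvd
  -- Membership: every coloring of `K_{2^r+1}` has a bad `q`-set of colors
  have hmem : (2 ^ r + 1) ∈ { n : ℕ | ∀ col : Sym2 (Fin n) → Fin r,
      ∃ Q : Finset (Fin r), Q.card ≤ (q + 1) - 1 ∧
        ¬ (unionGraph col Q).Colorable ((2 ^ q + 1) - 1) } := by
    intro col
    by_contra h
    push_neg at h
    simp only [Nat.add_sub_cancel] at h
    -- the blocks of colors
    set Qb : Fin (r / q) → Finset (Fin r) :=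
      fun j => Finset.univ.filter (fun i : Fin r => (i : ℕ) / q = (j : ℕ)) with hQb
    have hcard : ∀ j, (Qb j).card ≤ q := by
      intro j
      have : (Qb j).card ≤ (Finset.range q).card := by
        refine Finset.card_le_card_of_injOn (fun i : Fin r => (i : ℕ) % q) ?_ ?_
        · intro i _
          exact Finset.mem_range.mpr (Nat.mod_lt _ hq0)
        · intro i1 h1 i2 h2 hmod
          simp only [hQb, Finset.mem_coe, Finset.mem_filter] at h1 h2
          have hmod' : (i1 : ℕ) % q = (i2 : ℕ) % q := hmod
          have e3 : (i1 : ℕ) / q = (i2 : ℕ) / q := h1.2.trans h2.2.symm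
          apply Fin.ext
          calc (i1 : ℕ) = q * ((i1 : ℕ) / q) + (i1 : ℕ) % q :=
                (Nat.div_add_mod _ _).symm
            _ = q * ((i2 : ℕ) / q) + (i2 : ℕ) % q := by rw [e3, hmod']
            _ = (i2 : ℕ) := Nat.div_add_mod _ _
      simpa using this
    -- a `2^q`-coloring for each block
    have hcol : ∀ j, (unionGraph col (Qb j)).Colorable (2 ^ q) :=
      fun j => h (Qb j) (hcard j)
    have Cj : ∀ j, (unionGraph col (Qb j)).Coloring (Fin (2 ^ q)) :=
      fun j => (hcol j).some
    -- the product coloring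
    set Φ : Fin (2 ^ r + 1) → (Fin (r / q) → Fin (2 ^ q)) :=
      fun v j => Cj j v with hΦ
    have hcardlt : Fintype.card (Fin (r / q) → Fin (2 ^ q)) <
        Fintype.card (Fin (2 ^ r + 1)) := by
      rw [Fintype.card_fun, Fintype.card_fin, Fintype.card_fin, Fintype.card_fin,
        ← pow_mul, hrq]
      omega
    obtain ⟨u, v, huv, heq⟩ := Fintype.exists_ne_map_eq_of_card_lt Φ hcardlt
    -- the color of the edge `uv` and its block
    set c : Fin r := col s(u, v) with hc
    have hjlt : (c : ℕ) / q < r / q := by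
      rw [Nat.div_lt_iff_lt_mul hq0, mul_comm, hrq]
      exact c.isLt
    set j : Fin (r / q) := ⟨(c : ℕ) / q, hjlt⟩ with hj
    have hcQ : c ∈ Qb j := by
      simp [hQb, hj]
    have hadj : (unionGraph col (Qb j)).Adj u v := by
      rw [unionGraph, SimpleGraph.fromRel_adj]
      exact ⟨huv, Or.inl hcQ⟩
    have := (Cj j).valid hadj
    exact this (congrFun heq j)
  unfold Fchi
  refine le_antisymm (Nat.sInf_le hmem) (le_csInf ⟨_, hmem⟩ ?_)
  intro n hn
  by_contra hlt
  push_neg at hlt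
  have hn' : n ≤ 2 ^ r := by omega
  obtain ⟨col, hcol⟩ := lower_aux q r n hq hqr hn'
  obtain ⟨Q, hQcard, hQbad⟩ := hn col
  simp only [Nat.add_sub_cancel] at hQcard hQbad
  exact hQbad (hcol Q hQcard)
end

section
/- For all integers r ≥ 2 and p ≥ 2, one has F(r, p, p) ≤ 2 r^{p-2}. -/
/-!
Pick a vertex `v` of a set `A` of `2 r^(k+1)` vertices. By pigeonhole, at least `2 r^k` of the
other vertices are joined to `v` in one common color `c`, and by induction they contain `k + 2`
vertices spanning at most `k + 1` colors. Adding `v` contributes only edges of color `c`, giving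
`k + 3` vertices spanning at most `k + 2` colors.
-/

open Finset

section

variable {n r : ℕ} (col : Sym2 (Fin n) → Fin r)

theorem colorsOn_singleton (v : Fin n) : colorsOn col {v} = ∅ := by
  simp [colorsOn, sym2_singleton]

theorem colorsOn_insert_subset {v : Fin n} {S : Finset (Fin n)} {c : Fin r}
    (h : ∀ b ∈ S, col s(v, b) = c) :
    colorsOn col (insert v S) ⊆ insert c (colorsOn col S) := by
  intro x hx
  simp only [colorsOn, sym2_insert, filter_union, image_union, mem_union] at hx
  rcases hx with hx | hx
  · obtain ⟨_, he, rfl⟩ := mem_image.1 hx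
    obtain ⟨he, hvb⟩ := mem_filter.1 he
    obtain ⟨b, hb, rfl⟩ := mem_image.1 he
    have hbS : b ∈ S := (mem_insert.1 hb).resolve_left fun hbv => hvb (by simp [hbv])
    exact h b hbS ▸ mem_insert_self _ _
  · exact mem_insert_of_mem hx

theorem card_colorsOn_insert_le {v : Fin n} {S : Finset (Fin n)} {c : Fin r}
    (h : ∀ b ∈ S, col s(v, b) = c) :
    #(colorsOn col (insert v S)) ≤ #(colorsOn col S) + 1 :=
  (card_le_card (colorsOn_insert_subset col h)).trans (card_insert_le _ _)

theorem exists_lt_card_monochromatic_star {A : Finset (Fin n)} {v : Fin n} (hv : v ∈ A) {m : ℕ}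
    (hm : r * m < #A - 1) : ∃ c, m < #{b ∈ A.erase v | col s(v, b) = c} := by
  obtain ⟨c, -, hc⟩ := exists_lt_card_fiber_of_mul_lt_card_of_maps_to
    (s := A.erase v) (t := univ) (f := fun b => col s(v, b)) (fun _ _ => mem_univ _)
    (by rwa [card_univ, Fintype.card_fin, card_erase_of_mem hv])
  exact ⟨c, hc⟩

theorem exists_subset_card_colorsOn_le (hr : 1 < r) (k : ℕ) {A : Finset (Fin n)}
    (hA : 2 * r ^ k ≤ #A) : ∃ S ⊆ A, #S = k + 2 ∧ #(colorsOn col S) ≤ k + 1 := by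
  induction k generalizing A with
  | zero =>
    rw [pow_zero, mul_one] at hA
    obtain ⟨a, ha, b, hb, hab⟩ := one_lt_card.1 hA
    refine ⟨{a, b}, insert_subset ha (singleton_subset_iff.2 hb), card_pair hab, ?_⟩
    simpa [colorsOn_singleton] using
      card_colorsOn_insert_le col (S := {b}) (c := col s(a, b)) (by simp)
  | succ k ih =>
    have hr_le := Nat.le_self_pow k.add_one_ne_zero r
    obtain ⟨v, hv⟩ : A.Nonempty := card_pos.1 (by omega)
    have hm : r * (2 * r ^ k - 1) < #A - 1 := by
      rw [Nat.mul_sub_one, mul_left_comm, ← pow_succ']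
      omega
    obtain ⟨c, hc⟩ := exists_lt_card_monochromatic_star col hv hm
    obtain ⟨S, hSB, hS, hcol⟩ := ih (A := {b ∈ A.erase v | col s(v, b) = c}) (by omega)
    have hSA : S ⊆ A.erase v := hSB.trans (filter_subset _ _)
    have hvS : v ∉ S := fun h => by simpa using hSA h
    refine ⟨insert v S, insert_subset hv (hSA.trans (erase_subset _ _)),
      by rw [card_insert_of_notMem hvS, hS], ?_⟩
    exact (card_colorsOn_insert_le col fun b hb => (mem_filter.1 (hSB hb)).2).trans (by omega)

end

/-- `F(r, p, p) ≤ 2 r^{p-2}`. -/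
theorem stmt16 (r p : ℕ) (hr : 2 ≤ r) (hp : 2 ≤ p) :
    Fgen r p p ≤ 2 * r ^ (p - 2) := by
  obtain ⟨k, rfl⟩ := Nat.exists_eq_add_of_le' hp
  rw [Nat.add_sub_cancel]
  refine Nat.sInf_le fun col => ?_
  obtain ⟨S, -, hS, hcol⟩ := exists_subset_card_colorsOn_le col hr k (A := univ) (by simp)
  exact ⟨S, hS, hcol⟩
end

section
/- For all integers d ≥ 2, p ≥ 2^{d-1} + 1, and r ≥ d - 1, one has F_χ(r, p, d) ≥ 2^r + 1. In particular, for every fixed p, the function F_χ(r, p, q) is exponential in r whenever q ≤ ⌈log₂ p⌉. -/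
open Finset

/-!
Lower bound: label the `n ≤ 2^r` vertices by distinct vectors in `{0,1}^r` and color an edge by a
coordinate in which its endpoints differ. Restricting the labels to a set `Q` of coordinates is then
a proper coloring of the union of the color classes in `Q` with `2^|Q|` colors, so no `q - 1` color
classes have chromatic number `≥ p` once `2^(q-1) < p`.

Upper bound, needed only because `sInf ∅ = 0`: a weak multicolor Ramsey theorem makes the set
defining `Fchi` nonempty.
-/

section Ramsey

variable {α β : Type*} [LinearOrder α] [Fintype β] (col : Sym2 α → β)

/-- The greedy Erdős–Szekeres argument: take the least vertex `v`, set `κ v` to the color of its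
largest class of neighbours in `S`, and recurse into that class. -/
theorem exists_subset_forward_colored (m : ℕ) (S : Finset α)
    (hS : (Fintype.card β + 1) ^ m ≤ S.card) :
    ∃ T ⊆ S, m ≤ T.card ∧ ∃ κ : α → β, ∀ u ∈ T, ∀ w ∈ T, u < w → col s(u, w) = κ u := by
  classical
  induction m generalizing S with
  | zero =>
    obtain ⟨v₀, -⟩ : S.Nonempty := card_pos.mp (lt_of_lt_of_le (by positivity) hS)
    exact ⟨∅, empty_subset S, le_rfl, fun _ => col s(v₀, v₀), by simp⟩
  | succ m ih =>
    have hSne : S.Nonempty := card_pos.mp (lt_of_lt_of_le (by positivity) hS)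
    set v := S.min' hSne
    have hv : v ∈ S := S.min'_mem _
    have hfibre : ∃ c ∈ (univ : Finset β),
        (Fintype.card β + 1) ^ m ≤ #{w ∈ S.erase v | col s(v, w) = c} := by
      refine exists_le_card_fiber_of_mul_le_card_of_maps_to (fun _ _ => mem_univ _)
        ⟨col s(v, v), mem_univ _⟩ ?_
      have hpos : 0 < (Fintype.card β + 1) ^ m := by positivity
      rw [card_univ, card_erase_of_mem hv, mul_comm]
      rw [pow_succ, mul_add_one] at hS
      omega
    obtain ⟨c, -, hc⟩ := hfibre
    obtain ⟨T, hTS, hmT, κ, hκ⟩ := ih _ hc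
    have hTS' : T ⊆ S.erase v := hTS.trans (filter_subset _ _)
    have hvT : ∀ x ∈ T, v < x := fun x hx =>
      lt_of_le_of_ne (S.min'_le x (mem_of_mem_erase (hTS' hx))) (ne_of_mem_erase (hTS' hx)).symm
    refine ⟨insert v T, insert_subset hv (hTS'.trans (erase_subset v S)), ?_,
      Function.update κ v c, ?_⟩
    · rw [card_insert_of_notMem fun h => (hvT v h).false]
      omega
    intro u hu w hw huw
    rcases mem_insert.1 hu with rfl | hu
    · have hw : w ∈ T := (mem_insert.1 hw).resolve_left huw.ne'
      rw [Function.update_self]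
      exact (mem_filter.1 (hTS hw)).2
    · rcases mem_insert.1 hw with rfl | hw
      · exact absurd (hvT u hu) huw.not_gt
      · rw [Function.update_of_ne (hvT u hu).ne']
        exact hκ u hu w hw huw

theorem exists_monochromatic_of_pow_le [Fintype α] (p : ℕ)
    (h : (Fintype.card β + 1) ^ (Fintype.card β * p + 1) ≤ Fintype.card α) :
    ∃ (c : β) (U : Finset α), p < #U ∧ ∀ u ∈ U, ∀ w ∈ U, u ≠ w → col s(u, w) = c := by
  classical
  obtain ⟨T, -, hT, κ, hκ⟩ := exists_subset_forward_colored col _ univ h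
  obtain ⟨c, -, hc⟩ := exists_lt_card_fiber_of_mul_lt_card_of_maps_to
    (s := T) (fun x _ => mem_univ (κ x)) (n := p) (by rw [card_univ]; omega)
  refine ⟨c, _, hc, fun u hu w hw huw => ?_⟩
  rw [mem_filter] at hu hw
  rcases huw.lt_or_gt with huw | hwu
  · rw [hκ u hu.1 w hw.1 huw, hu.2]
  · rw [Sym2.eq_swap, hκ w hw.1 u hu.1 hwu, hw.2]

end Ramsey

theorem exists_sym2_separating {α ι β : Type*} [Nonempty ι] {f : α → ι → β}
    (hf : Function.Injective f) :
    ∃ col : Sym2 α → ι, ∀ v w, v ≠ w → f v (col s(v, w)) ≠ f w (col s(v, w)) := by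
  have h : ∀ e : Sym2 α, ∃ i, ∀ v w, e = s(v, w) → v ≠ w → f v i ≠ f w i := by
    refine Sym2.ind fun v w => ?_
    by_cases hvw : v = w
    · subst hvw
      refine ⟨Classical.arbitrary ι, fun v' w' he hne => ?_⟩
      rcases Sym2.eq_iff.1 he with ⟨rfl, rfl⟩ | ⟨rfl, rfl⟩ <;> exact absurd rfl hne
    · obtain ⟨i, hi⟩ := Function.ne_iff.1 (hf.ne hvw)
      refine ⟨i, fun v' w' he _ => ?_⟩
      rcases Sym2.eq_iff.1 he with ⟨rfl, rfl⟩ | ⟨rfl, rfl⟩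
      exacts [hi, Ne.symm hi]
  choose col hcol using h
  exact ⟨col, fun v w hvw => hcol _ v w rfl hvw⟩

theorem unionGraph_colorable_of_separating {n N : ℕ} {β : Type*} [Fintype β]
    {col : Sym2 (Fin n) → Fin N} {f : Fin n → Fin N → β}
    (hcol : ∀ v w, v ≠ w → f v (col s(v, w)) ≠ f w (col s(v, w))) (Q : Finset (Fin N)) :
    (unionGraph col Q).Colorable (Fintype.card β ^ #Q) := by
  let C : (unionGraph col Q).Coloring (Q → β) := SimpleGraph.Coloring.mk (fun v i => f v i) <| by
    intro v w hvw
    obtain ⟨hne, hQ⟩ := (SimpleGraph.fromRel_adj _ _ _).1 hvw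
    have hQ : col s(v, w) ∈ Q := hQ.elim id fun h => by rwa [Sym2.eq_swap]
    exact fun heq => hcol v w hne (congrFun heq ⟨_, hQ⟩)
  simpa using C.colorable

theorem exists_coloring_unionGraph_colorable {n r : ℕ} (hr : 0 < r) (hn : n ≤ 2 ^ r) :
    ∃ col : Sym2 (Fin n) → Fin r, ∀ Q, (unionGraph col Q).Colorable (2 ^ #Q) := by
  obtain ⟨f⟩ : Nonempty (Fin n ↪ (Fin r → Bool)) := by
    rw [Function.Embedding.nonempty_iff_card_le]
    simpa using hn
  have : Nonempty (Fin r) := ⟨⟨0, hr⟩⟩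
  obtain ⟨col, hcol⟩ := exists_sym2_separating f.injective
  exact ⟨col, fun Q => by simpa using unionGraph_colorable_of_separating hcol Q⟩

theorem exists_not_colorable_unionGraph_singleton {n r : ℕ} (p : ℕ)
    (hn : (r + 1) ^ (r * p + 1) ≤ n) (col : Sym2 (Fin n) → Fin r) :
    ∃ c, ¬ (unionGraph col {c}).Colorable p := by
  obtain ⟨c, U, hU, hmono⟩ :=
    exists_monochromatic_of_pow_le col p (by simpa only [Fintype.card_fin] using hn)
  have hclique : (unionGraph col {c}).IsClique (U : Set (Fin n)) := fun u hu w hw huw =>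
    (SimpleGraph.fromRel_adj _ _ _).2 ⟨huw, Or.inl (mem_singleton.2 (hmono u hu w hw huw))⟩
  exact ⟨c, fun hcol => hU.not_ge (hclique.card_le_of_colorable hcol)⟩

theorem le_Fchi {r p q N : ℕ} (hq : 2 ≤ q)
    (h : ∀ n ≤ N, ∃ col : Sym2 (Fin n) → Fin r,
      ∀ Q : Finset (Fin r), Q.card ≤ q - 1 → (unionGraph col Q).Colorable (p - 1)) :
    N + 1 ≤ Fchi r p q := by
  refine le_csInf ⟨(r + 1) ^ (r * (p - 1) + 1), fun col => ?_⟩ fun n hn => ?_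
  · obtain ⟨c, hc⟩ := exists_not_colorable_unionGraph_singleton (p - 1) le_rfl col
    exact ⟨{c}, by rw [card_singleton]; omega, hc⟩
  · by_contra! hnN
    obtain ⟨col, hcol⟩ := h n (by omega)
    obtain ⟨Q, hQ, hQcol⟩ := hn col
    exact hQcol (hcol Q hQ)

/-- For `d ≥ 2`, `p ≥ 2^{d-1} + 1` and `r ≥ d - 1` one has `F_χ(r, p, d) ≥ 2^r + 1`;
in particular `F_χ(r, p, q) ≥ 2^r + 1` whenever `2 ≤ q ≤ ⌈log₂ p⌉` and `r ≥ q - 1`,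
so for fixed `p` the function `F_χ(r,p,q)` is exponential in `r` for `q ≤ ⌈log₂ p⌉`. -/
theorem stmt17 :
    (∀ d p r : ℕ, 2 ≤ d → 2 ^ (d - 1) + 1 ≤ p → d - 1 ≤ r →
      2 ^ r + 1 ≤ Fchi r p d) ∧
    (∀ p q r : ℕ, 2 ≤ q → q ≤ Nat.clog 2 p → q - 1 ≤ r →
      2 ^ r + 1 ≤ Fchi r p q) := by
  have main : ∀ d p r : ℕ, 2 ≤ d → 2 ^ (d - 1) + 1 ≤ p → d - 1 ≤ r →
      2 ^ r + 1 ≤ Fchi r p d := by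
    intro d p r hd hp hr
    refine le_Fchi hd fun n hn => ?_
    obtain ⟨col, hcol⟩ := exists_coloring_unionGraph_colorable (by omega) hn
    refine ⟨col, fun Q hQ => (hcol Q).mono ?_⟩
    calc 2 ^ #Q ≤ 2 ^ (d - 1) := Nat.pow_le_pow_right two_pos hQ
      _ ≤ p - 1 := by omega
  refine ⟨main, fun p q r hq hqp hr => main q p r hq ?_ hr⟩
  have : 2 ^ (q - 1) < p := (Nat.lt_clog_iff_pow_lt one_lt_two).1 (by omega)
  omega
end
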